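/- In the deterministic service model, removing a customer from the state cannot increase the value: for all r, t ∈ ℕ, every finite multiset M of deadlines and every deadline d ∈ ℕ, one has V(r, t, M) ≤ V(r, t, d ::ₘ M). -/

import Mathlib

/-- Inconvenience function: `f η t d = η^(t-d+1)` if the deadline `d` is due
(`d ≤ t`), and `0` otherwise. -/
noncomputable def inconvenience (η : ℝ) (t d : ℕ) : ℝ :=
  if d ≤ t then η ^ (t - d + 1) else 0

/-- Value function of the deterministic service model: over `r` remaining
periods, starting in period `t` with multiset `M` of customer deadlines and
per-period service capacity `m`, the minimal accumulated inconvenience.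
`V η m 0 t M = 0` and
`V η m (r+1) t M = min over submultisets A ≤ M with card A ≤ m of
  [∑_{d ∈ M - A} f(t,d) + V η m r (t+1) (M - A)]`. -/
noncomputable def V (η : ℝ) (m : ℕ) : ℕ → ℕ → Multiset ℕ → ℝ
  | 0, _, _ => 0
  | r + 1, t, M =>
      ⨅ A : {A : Multiset ℕ // A ≤ M ∧ Multiset.card A ≤ m},
        (((M - A.1).map (inconvenience η t)).sum + V η m r (t + 1) (M - A.1))

/-! Proof by induction on the horizon: any admissible service set `A` for `d ::ₘ M` yields the
admissible set `A.erase d` for `M`. If `d ∈ A` both leave the same customers behind; otherwise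
`d` is left waiting, which only adds the nonnegative cost `f(t,d)` now and, by induction, cannot
lower the value later. -/

namespace Multiset

variable {α : Type*} [DecidableEq α]

lemma cons_sub_of_mem {a : α} {t : Multiset α} (s : Multiset α) (h : a ∈ t) :
    a ::ₘ s - t = s - t.erase a := by
  conv_lhs => rw [← cons_erase h]
  rw [sub_cons, erase_cons_head]

lemma cons_sub_of_notMem {a : α} {t : Multiset α} (s : Multiset α) (h : a ∉ t) :
    a ::ₘ s - t = a ::ₘ (s - t) := by
  ext b
  by_cases hb : b = a
  · subst hb
    simp [count_eq_zero_of_notMem h]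
  · simp [count_cons_of_ne hb]

end Multiset

instance (M : Multiset ℕ) (m : ℕ) :
    Nonempty {A : Multiset ℕ // A ≤ M ∧ Multiset.card A ≤ m} :=
  ⟨⟨0, Multiset.zero_le M, Nat.zero_le m⟩⟩

section

variable {η : ℝ}

lemma inconvenience_nonneg (hη : 0 ≤ η) (t d : ℕ) : 0 ≤ inconvenience η t d := by
  unfold inconvenience
  split_ifs <;> positivity

lemma sum_map_inconvenience_nonneg (hη : 0 ≤ η) (t : ℕ) (M : Multiset ℕ) :
    0 ≤ (M.map (inconvenience η t)).sum :=
  Multiset.sum_nonneg fun _ hx => by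
    obtain ⟨d, -, rfl⟩ := Multiset.mem_map.mp hx
    exact inconvenience_nonneg hη t d

lemma V_nonneg (hη : 0 ≤ η) (m r t : ℕ) (M : Multiset ℕ) : 0 ≤ V η m r t M := by
  induction r generalizing t M with
  | zero => exact le_rfl
  | succ r ih =>
    exact le_ciInf fun A =>
      add_nonneg (sum_map_inconvenience_nonneg hη t _) (ih (t + 1) _)

lemma V_succ_le (hη : 0 ≤ η) {m r t : ℕ} {A M : Multiset ℕ} (hA : A ≤ M)
    (hcard : Multiset.card A ≤ m) :
    V η m (r + 1) t M ≤
      ((M - A).map (inconvenience η t)).sum + V η m r (t + 1) (M - A) := by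
  refine ciInf_le ⟨0, ?_⟩ (⟨A, hA, hcard⟩ : {A : Multiset ℕ // A ≤ M ∧ Multiset.card A ≤ m})
  rintro _ ⟨B, rfl⟩
  exact add_nonneg (sum_map_inconvenience_nonneg hη t _) (V_nonneg hη m r (t + 1) _)

end

/-- Removing a customer from the state cannot increase the value. -/
theorem value_le_of_remove_customer (η : ℝ) (hη : 1 < η) (m : ℕ)
    (r t : ℕ) (M : Multiset ℕ) (d : ℕ) :
    V η m r t M ≤ V η m r t (d ::ₘ M) := by
  have hη₀ : 0 ≤ η := by linarith
  induction r generalizing t M with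
  | zero => exact le_rfl
  | succ r ih =>
    refine le_ciInf fun ⟨A, hA, hcard⟩ => ?_
    have hAM : A.erase d ≤ M := by simpa using Multiset.erase_le_erase d hA
    have hV := V_succ_le (r := r) (t := t) hη₀ hAM (Multiset.card_erase_le.trans hcard)
    by_cases hd : d ∈ A
    · rwa [Multiset.cons_sub_of_mem M hd]
    · rw [Multiset.erase_of_notMem hd] at hV
      rw [Multiset.cons_sub_of_notMem M hd, Multiset.map_cons, Multiset.sum_cons]
      have hlater := ih (t + 1) (M - A)
      have hnow := inconvenience_nonneg hη₀ t d
      linarith
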